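/- Let M be a connected 2-level poset that is 2-CS-transitive and 3-CS-transitive, containing at least one pair a < b with a ∈ Min(M) and b ∈ Max(M), and suppose that no interval [a,b]^{M^D} with a ∈ Min(M), b ∈ Max(M), a < b is isomorphic to the 2-element chain or to the 3-element chain. Then the comparability graph of M is locally finite (every vertex has finite degree) if and only if every interval [a,b]^{M^D} with a ∈ Min(M), b ∈ Max(M), a < b is finite. -/

import Mathlib

set_option autoImplicit false

section Preamble

/-- A *cut* of a poset `M`: a nonempty subset, bounded above, which equals the set of
lower bounds of its set of upper bounds. -/
def IsCut {M : Type*} [PartialOrder M] (J : Set M) : Prop :=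
  J.Nonempty ∧ (upperBounds J).Nonempty ∧ lowerBounds (upperBounds J) = J

/-- The Dedekind–MacNeille completion of `M`: the set of cuts, ordered by inclusion. -/
abbrev DMC (M : Type*) [PartialOrder M] : Type _ := {J : Set M // IsCut J}

/-- The canonical embedding of `M` into `DMC M`, `a ↦ {x | x ≤ a}`. -/
def principalCut {M : Type*} [PartialOrder M] (a : M) : DMC M :=
  ⟨Set.Iic a, ⟨a, le_refl a⟩, ⟨a, fun _ hx => hx⟩, by
    apply Set.Subset.antisymm
    · intro x hx
      exact hx (fun _ hy => hy)
    · exact subset_lowerBounds_upperBounds _⟩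

/-- The image of `M` in its Dedekind–MacNeille completion (the principal cuts). -/
def principalSet (M : Type*) [PartialOrder M] : Set (DMC M) :=
  Set.range (fun a : M => principalCut a)

/-- A 2-level poset: every element is minimal or maximal. -/
def IsTwoLevel (M : Type*) [PartialOrder M] : Prop :=
  ∀ x : M, IsMin x ∨ IsMax x

/-- The set `Min(M)` of minimal elements. -/
def minSet (M : Type*) [PartialOrder M] : Set M := {x | IsMin x}

/-- The set `Max(M)` of maximal elements. -/
def maxSet (M : Type*) [PartialOrder M] : Set M := {x | IsMax x}

/-- The comparability graph of a poset: `x` adjacent to `y` iff `x < y` or `y < x`. -/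
def compGraph (M : Type*) [PartialOrder M] : SimpleGraph M where
  Adj x y := x < y ∨ y < x
  symm := ⟨fun _ _ h => Or.symm h⟩
  loopless := ⟨fun x h => by rcases h with h | h <;> exact lt_irrefl x h⟩

/-- Upward ramification points of `M`: infima in `DMC M` of two incomparable elements of `M`. -/
def upRam (M : Type*) [PartialOrder M] : Set (DMC M) :=
  {p | ∃ a b : M, ¬ a ≤ b ∧ ¬ b ≤ a ∧ IsGLB {principalCut a, principalCut b} p}

/-- Downward ramification points of `M`: suprema in `DMC M` of two incomparable elements of `M`. -/
def downRam (M : Type*) [PartialOrder M] : Set (DMC M) :=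
  {p | ∃ a b : M, ¬ a ≤ b ∧ ¬ b ≤ a ∧ IsLUB {principalCut a, principalCut b} p}

/-- `M⁺ = M ∪ Ram(M)`, as a subset of `DMC M`. -/
def MPlus (M : Type*) [PartialOrder M] : Set (DMC M) :=
  principalSet M ∪ upRam M ∪ downRam M

/-- A 2-arc in a graph. -/
def IsTwoArc {V : Type*} (G : SimpleGraph V) (v₀ v₁ v₂ : V) : Prop :=
  G.Adj v₀ v₁ ∧ G.Adj v₁ v₂ ∧ v₀ ≠ v₂

/-- Local 1-arc-transitivity: every vertex stabilizer is transitive on neighbours. -/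
def LocallyOneArcTransitive {V : Type*} (G : SimpleGraph V) : Prop :=
  ∀ v u w : V, G.Adj v u → G.Adj v w → ∃ g : G ≃g G, g v = v ∧ g u = w

/-- Local 2-arc-transitivity: every vertex stabilizer is transitive on 2-arcs from that vertex. -/
def LocallyTwoArcTransitive {V : Type*} (G : SimpleGraph V) : Prop :=
  ∀ v u₁ w₁ u₂ w₂ : V, IsTwoArc G v u₁ w₁ → IsTwoArc G v u₂ w₂ →
    ∃ g : G ≃g G, g v = v ∧ g u₁ = u₂ ∧ g w₁ = w₂

/-- (Global) 1-arc-transitivity of a graph. -/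
def OneArcTransitive {V : Type*} (G : SimpleGraph V) : Prop :=
  ∀ v₀ v₁ u₀ u₁ : V, G.Adj v₀ v₁ → G.Adj u₀ u₁ →
    ∃ g : G ≃g G, g v₀ = u₀ ∧ g v₁ = u₁

/-- (Global) 2-arc-transitivity of a graph. -/
def TwoArcTransitive {V : Type*} (G : SimpleGraph V) : Prop :=
  ∀ v₀ v₁ v₂ u₀ u₁ u₂ : V, IsTwoArc G v₀ v₁ v₂ → IsTwoArc G u₀ u₁ u₂ →
    ∃ g : G ≃g G, g v₀ = u₀ ∧ g v₁ = u₁ ∧ g v₂ = u₂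

/-- 3-CS-homogeneity: every isomorphism between connected 3-element induced subposets
extends to an automorphism. -/
def ThreeCSHomogeneous (M : Type*) [PartialOrder M] : Prop :=
  ∀ A B : Set M, A.ncard = 3 → B.ncard = 3 →
    ((compGraph M).induce A).Connected → ((compGraph M).induce B).Connected →
    ∀ f : ↥A ≃o ↥B, ∃ g : M ≃o M, ∀ a : ↥A, g ↑a = ↑(f a)

/-- 2-CS-transitivity: the automorphism group is transitive on comparable pairs. -/
def TwoCSTransitive (M : Type*) [PartialOrder M] : Prop :=
  ∀ a b a' b' : M, a < b → a' < b' → ∃ g : M ≃o M, g a = a' ∧ g b = b'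

/-- 3-CS-transitivity: for any two isomorphic connected 3-element induced subposets there
is an automorphism carrying one onto the other. -/
def ThreeCSTransitive (M : Type*) [PartialOrder M] : Prop :=
  ∀ A B : Set M, A.ncard = 3 → B.ncard = 3 →
    ((compGraph M).induce A).Connected → ((compGraph M).induce B).Connected →
    Nonempty (↥A ≃o ↥B) → ∃ g : M ≃o M, ⇑g '' A = B

/-- A subset of a poset is a `k`-diamond if it consists of a least element, a greatest
element, and exactly `k` pairwise incomparable elements strictly in between. -/
def IsKDiamond {P : Type*} [PartialOrder P] (s : Set P) (k : ℕ) : Prop :=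
  ∃ a b : P, a ∈ s ∧ b ∈ s ∧ a ≠ b ∧ (∀ z ∈ s, a ≤ z ∧ z ≤ b) ∧
    (s \ {a, b}).ncard = k ∧
    ∀ z ∈ s \ ({a, b} : Set P), ∀ w ∈ s \ ({a, b} : Set P), z ≠ w → ¬ z ≤ w

end Preamble

/-!
Below a maximal element `b`, the closures `pairClosure p q = {p, q}ᵘˡ` of pairs `p ≠ q < b` behave
like the lines of a linear space. By 3-CS-transitivity any two of them are conjugate under the
stabiliser of `b`, and two distinct points of a line span it: otherwise the automorphism fixing
`b` that maps the line onto the smaller line they span could be iterated, giving a strictly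
decreasing chain of cuts longer than a completion interval (by 2-CS-transitivity all these
intervals have the same size). The lines through a fixed `a < b` are cuts in `[a, b]`, so there are finitely many of them.
If infinitely many elements lay below `b`, one line through `a` would be infinite, hence so would
every line, in particular a line `C` missing `a` (the 3-element chain is excluded, so `a` lies on
two lines). The lines joining `a` to the points of `C` are pairwise distinct, a contradiction.
Excluding the 2-element chain is what makes every pair below `b` have a second upper bound, so
that `b` itself is not on any line. Minimal elements are handled in the dual poset, whose
completion is the dual of `M^D`.
-/

open Set OrderDual

section

variable {M N : Type*} [PartialOrder M] [PartialOrder N]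

lemma Set.Infinite.exists_infinite_of_finite_image {α : Type*} {s : Set α} {F : α → Set α}
    (hs : s.Infinite) (hF : (F '' s).Finite) (hmem : ∀ z ∈ s, z ∈ F z) :
    ∃ z ∈ s, (F z).Infinite := by
  by_contra! h
  refine hs ((hF.sUnion ?_).subset fun z hz => mem_sUnion_of_mem (hmem z hz) ⟨z, hz, rfl⟩)
  rintro _ ⟨z, hz, rfl⟩
  exact h z hz

lemma StrictAnti.add_one_le_ncard {P : Type*} [PartialOrder P] {φ : ℕ → P} (hφ : StrictAnti φ)
    {s : Set P} (hs : s.Finite) {n : ℕ} (hφs : ∀ i ≤ n, φ i ∈ s) : n + 1 ≤ s.ncard := by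
  have := ncard_le_ncard_of_injOn φ (s := (Finset.Iic n : Set ℕ))
    (fun i hi => hφs i (Finset.mem_Iic.1 hi)) hφ.injective.injOn hs
  rwa [ncard_coe_finset, Nat.card_Iic] at this

lemma upperBounds_lowerBounds_upperBounds (s : Set M) :
    upperBounds (lowerBounds (upperBounds s)) = upperBounds s :=
  gc_upperBounds_lowerBounds.l_u_l_eq_l s

lemma isCut_lowerBounds_upperBounds {s : Set M} (hs : s.Nonempty)
    (hbdd : (upperBounds s).Nonempty) : IsCut (lowerBounds (upperBounds s)) :=
  ⟨hs.mono (subset_lowerBounds_upperBounds s), by rwa [upperBounds_lowerBounds_upperBounds],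
    by rw [upperBounds_lowerBounds_upperBounds]⟩

lemma OrderIso.isCut_image (e : M ≃o N) {J : Set M} (hJ : IsCut J) : IsCut (e '' J) := by
  obtain ⟨hne, hbdd, hcl⟩ := hJ
  refine ⟨hne.image e, ?_, ?_⟩
  · rw [e.upperBounds_image]
    exact hbdd.image e
  · rw [e.upperBounds_image, e.lowerBounds_image, hcl]

lemma principalCut_le_iff {a : M} {J : DMC M} : principalCut a ≤ J ↔ a ∈ J.1 := by
  refine ⟨fun h => h le_rfl, fun ha x hxa => ?_⟩
  rw [← J.2.2.2]
  exact fun u hu => hxa.trans (hu ha)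

lemma principalCut_le_principalCut {a b : M} : principalCut a ≤ principalCut b ↔ a ≤ b :=
  principalCut_le_iff

lemma mem_Icc_principalCut {a b : M} {J : DMC M} :
    J ∈ Icc (principalCut a) (principalCut b) ↔ a ∈ J.1 ∧ J.1 ⊆ Iic b :=
  and_congr principalCut_le_iff Iff.rfl

lemma mem_Icc_principalCut_cases {a b : M} {J : DMC M}
    (hJ : J ∈ Icc (principalCut a) (principalCut b)) :
    J = principalCut a ∨ J = principalCut b ∨ (b ∉ J.1 ∧ ∃ z ∈ J.1, ¬ z ≤ a) := by
  by_cases hbJ : b ∈ J.1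
  · exact Or.inr (Or.inl (le_antisymm hJ.2 (principalCut_le_iff.2 hbJ)))
  by_cases hJa : J.1 ⊆ Iic a
  · exact Or.inl (le_antisymm hJa hJ.1)
  · exact Or.inr (Or.inr ⟨hbJ, not_subset.1 hJa⟩)

lemma finite_Icc_principalCut_of_finite_Iic {a b : M} (hb : (Iic b).Finite) :
    (Icc (principalCut a) (principalCut b)).Finite :=
  Finite.of_finite_image (hb.finite_subsets.subset (by rintro _ ⟨J, hJ, rfl⟩; exact hJ.2))
    Subtype.val_injective.injOn

lemma exists_of_ncard_Icc_ne_two {a b : M} (hab : a < b)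
    (h : (Icc (principalCut a) (principalCut b)).ncard ≠ 2) :
    ∃ x c, x ≤ b ∧ a ≤ c ∧ x ≤ c ∧ ¬ x ≤ a ∧ ¬ b ≤ c := by
  have hab' : principalCut a ≤ principalCut b := principalCut_le_principalCut.2 hab.le
  have hpair : {principalCut a, principalCut b} ⊆ Icc (principalCut a) (principalCut b) :=
    pair_subset ⟨le_rfl, hab'⟩ ⟨hab', le_rfl⟩
  obtain ⟨J, hJ, hJne⟩ := not_subset.1 fun hsub => h <| by
    rw [hsub.antisymm hpair, ncard_pair fun he => hab.not_ge (principalCut_le_principalCut.1 he.ge)]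
  obtain hJa | hJb | ⟨hbJ, z, hzJ, hza⟩ := mem_Icc_principalCut_cases hJ
  · exact absurd (Or.inl hJa) hJne
  · exact absurd (Or.inr hJb) hJne
  obtain ⟨c, hc, hbc⟩ : ∃ c ∈ upperBounds J.1, ¬ b ≤ c := by
    by_contra! hub
    exact hbJ (J.2.2.2 ▸ hub)
  exact ⟨z, c, hJ.2 hzJ, hc (mem_Icc_principalCut.1 hJ).1, hc hzJ, hza, hbc⟩

namespace DMC

def congr (e : M ≃o N) : DMC M ≃o DMC N where
  toFun J := ⟨e '' J.1, e.isCut_image J.2⟩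
  invFun K := ⟨e.symm '' K.1, e.symm.isCut_image K.2⟩
  left_inv J := Subtype.ext (e.symm_image_image J.1)
  right_inv K := Subtype.ext (e.image_symm_image K.1)
  map_rel_iff' := image_subset_image_iff e.injective

lemma congr_principalCut (e : M ≃o N) (a : M) : congr e (principalCut a) = principalCut (e a) :=
  Subtype.ext (e.image_Iic a)

lemma ncard_Icc_congr (e : M ≃o N) (a b : M) :
    (Icc (principalCut (e a)) (principalCut (e b))).ncard =
      (Icc (principalCut a) (principalCut b)).ncard := by
  rw [← congr_principalCut, ← congr_principalCut, ← OrderIso.image_Icc,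
    ncard_image_of_injective _ (congr e).injective]

lemma isCut_preimage_ofDual_upperBounds {J : Set M} (hJ : IsCut J) :
    IsCut (ofDual ⁻¹' upperBounds J) := by
  obtain ⟨hne, hbdd, hcl⟩ := hJ
  refine ⟨hbdd, ?_, ?_⟩
  · change (ofDual ⁻¹' lowerBounds (upperBounds J)).Nonempty
    rwa [hcl]
  · change ofDual ⁻¹' upperBounds (lowerBounds (upperBounds J)) = _
    rw [upperBounds_lowerBounds_upperBounds]

def dualEquiv : DMC M ≃o (DMC Mᵒᵈ)ᵒᵈ where
  toFun J := toDual ⟨ofDual ⁻¹' upperBounds J.1, isCut_preimage_ofDual_upperBounds J.2⟩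
  invFun K := ⟨lowerBounds (toDual ⁻¹' (ofDual K).1),
    isCut_preimage_ofDual_upperBounds (M := Mᵒᵈ) (ofDual K).2⟩
  left_inv J := Subtype.ext J.2.2.2
  right_inv K := Subtype.ext (ofDual K).2.2.2
  map_rel_iff' {J J'} := by
    change upperBounds J'.1 ⊆ upperBounds J.1 ↔ J.1 ⊆ J'.1
    refine ⟨fun h => ?_, fun h => upperBounds_mono_set h⟩
    rw [← J.2.2.2, ← J'.2.2.2]
    exact lowerBounds_mono_set h

lemma dualEquiv_principalCut (a : M) :
    dualEquiv (principalCut a) = toDual (principalCut (toDual a)) :=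
  congrArg toDual (Subtype.ext (upperBounds_Iic (a := a)))

lemma ncard_Icc_dual (a b : Mᵒᵈ) :
    (Icc (principalCut a) (principalCut b)).ncard =
      (Icc (principalCut (ofDual b)) (principalCut (ofDual a))).ncard := by
  rw [← ncard_image_of_injective _ (dualEquiv (M := M)).injective, OrderIso.image_Icc,
    dualEquiv_principalCut, dualEquiv_principalCut, Icc_toDual]
  rfl

lemma finite_Icc_dual_iff (a b : Mᵒᵈ) :
    (Icc (principalCut a) (principalCut b)).Finite ↔
      (Icc (principalCut (ofDual b)) (principalCut (ofDual a))).Finite := by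
  rw [← finite_image_iff (dualEquiv (M := M)).injective.injOn, OrderIso.image_Icc,
    dualEquiv_principalCut, dualEquiv_principalCut, Icc_toDual]
  rfl

end DMC

/-- For two minimal elements below a common maximal one, this is the line through them. -/
def pairClosure (p q : M) : Set M := lowerBounds (upperBounds {p, q})

lemma mem_pairClosure_left (p q : M) : p ∈ pairClosure p q :=
  subset_lowerBounds_upperBounds _ (mem_insert p _)

lemma mem_pairClosure_right (p q : M) : q ∈ pairClosure p q :=
  subset_lowerBounds_upperBounds _ (mem_insert_of_mem p rfl)

lemma isCut_pairClosure {p q w : M} (hp : p ≤ w) (hq : q ≤ w) : IsCut (pairClosure p q) :=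
  isCut_lowerBounds_upperBounds (insert_nonempty p _) ⟨w, by simp [hp, hq]⟩

lemma pairClosure_subset_Iic {p q w : M} (hp : p ≤ w) (hq : q ≤ w) : pairClosure p q ⊆ Iic w :=
  fun _ hx => hx (by simp [hp, hq])

lemma pairClosure_subset {p q : M} {J : Set M} (hJ : IsCut J) (hp : p ∈ J) (hq : q ∈ J) :
    pairClosure p q ⊆ J :=
  hJ.2.2 ▸ lowerBounds_mono_set (upperBounds_mono_set (pair_subset hp hq))

lemma OrderIso.image_pairClosure (g : M ≃o M) {p q u v : M} (h : g '' {p, q} = {u, v}) :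
    g '' pairClosure p q = pairClosure u v := by
  rw [pairClosure, ← g.lowerBounds_image, ← g.upperBounds_image, h, pairClosure]

lemma finite_image_pairClosure {a b : M}
    (hI : (Icc (principalCut a) (principalCut b)).Finite) (hab : a ≤ b) :
    (pairClosure a '' Iic b).Finite :=
  (hI.image Subtype.val).subset <| by
    rintro _ ⟨z, hz, rfl⟩
    exact ⟨⟨_, isCut_pairClosure hab hz⟩,
      mem_Icc_principalCut.2 ⟨mem_pairClosure_left a z, pairClosure_subset_Iic hab hz⟩, rfl⟩

lemma TwoCSTransitive.ncard_Icc_eq (h : TwoCSTransitive M) {a b a' b' : M} (hab : a < b)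
    (hab' : a' < b') :
    (Icc (principalCut a) (principalCut b)).ncard =
      (Icc (principalCut a') (principalCut b')).ncard := by
  obtain ⟨g, rfl, rfl⟩ := h a b a' b' hab hab'
  exact (DMC.ncard_Icc_congr g a b).symm

lemma IsTwoLevel.dual (h : IsTwoLevel M) : IsTwoLevel Mᵒᵈ :=
  fun x => (h (ofDual x)).symm

lemma TwoCSTransitive.dual (h : TwoCSTransitive M) : TwoCSTransitive Mᵒᵈ :=
  fun a b a' b' hab hab' =>
    let ⟨g, hga, hgb⟩ := h (ofDual b) (ofDual a) (ofDual b') (ofDual a') hab hab'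
    ⟨g.dual, hgb, hga⟩

lemma ThreeCSTransitive.dual (h : ThreeCSTransitive M) : ThreeCSTransitive Mᵒᵈ := by
  intro A B hA hB hAc hBc ⟨e⟩
  have hG : compGraph Mᵒᵈ = compGraph M := by
    ext x y
    exact or_comm
  let e' : (ofDual ⁻¹' A : Set M) ≃o (ofDual ⁻¹' B : Set M) :=
    { e.toEquiv with map_rel_iff' := fun {x y} => e.map_rel_iff (a := y) (b := x) }
  obtain ⟨g, hg⟩ := h (ofDual ⁻¹' A) (ofDual ⁻¹' B) hA hB (hG ▸ hAc) (hG ▸ hBc) ⟨e'⟩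
  exact ⟨g.dual, hg⟩

lemma exists_orderIso_lambda {p q w u v w' : M}
    (hpq : ¬ p ≤ q) (hqp : ¬ q ≤ p) (hpw : p < w) (hqw : q < w)
    (huv : ¬ u ≤ v) (hvu : ¬ v ≤ u) (huw : u < w') (hvw : v < w') :
    Nonempty ((↥({w, p, q} : Set M)) ≃o ↥({w', u, v} : Set M)) := by
  classical
  have hcases : ∀ {a b c x : M}, x ∈ ({a, b, c} : Set M) → x = a ∨ x = b ∨ x = c := by simp
  have hne : p ≠ w ∧ w ≠ p ∧ q ≠ w ∧ w ≠ q ∧ p ≠ q ∧ q ≠ p ∧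
      u ≠ w' ∧ w' ≠ u ∧ v ≠ w' ∧ w' ≠ v ∧ u ≠ v ∧ v ≠ u :=
    ⟨hpw.ne, hpw.ne', hqw.ne, hqw.ne', fun h => hpq h.le, fun h => hqp h.le,
      huw.ne, huw.ne', hvw.ne, hvw.ne', fun h => huv h.le, fun h => hvu h.le⟩
  let f : M → M := fun x => if x = w then w' else if x = p then u else v
  let f' : M → M := fun y => if y = w' then w else if y = u then p else q
  exact ⟨{ toFun x := ⟨f x.1, by
              obtain ⟨x, hx⟩ := x
              rcases hcases hx with h | h | h <;> subst x <;> simp [f, hne]⟩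
           invFun y := ⟨f' y.1, by
              obtain ⟨y, hy⟩ := y
              rcases hcases hy with h | h | h <;> subst y <;> simp [f', hne]⟩
           left_inv x := by
              obtain ⟨x, hx⟩ := x
              rcases hcases hx with h | h | h <;> subst x <;> simp [f, f', hne]
           right_inv y := by
              obtain ⟨y, hy⟩ := y
              rcases hcases hy with h | h | h <;> subst y <;> simp [f, f', hne]
           map_rel_iff' := by
              rintro ⟨x, hx⟩ ⟨y, hy⟩
              rcases hcases hx with h | h | h <;> subst x <;>
              rcases hcases hy with h | h | h <;> subst y <;>
                simp [f, hne, hpw.le, hqw.le, huw.le, hvw.le, hpw.not_ge, hqw.not_ge,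
                  huw.not_ge, hvw.not_ge, hpq, hqp, huv, hvu] }⟩

lemma connected_induce_lambda {p q w : M} (hpw : p < w) (hqw : q < w) :
    ((compGraph M).induce ({w, p, q} : Set M)).Connected := by
  have hw : w ∈ ({w, p, q} : Set M) := mem_insert w _
  have reach : ∀ z, ((compGraph M).induce ({w, p, q} : Set M)).Reachable z ⟨w, hw⟩ := by
    rintro ⟨z, hz | hz | hz⟩ <;> subst z
    exacts [.refl _, SimpleGraph.Adj.reachable (Or.inl hpw),
      SimpleGraph.Adj.reachable (Or.inl hqw)]
  exact (SimpleGraph.connected_iff _).2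
    ⟨fun x y => (reach x).trans (reach y).symm, ⟨⟨w, hw⟩⟩⟩

lemma ThreeCSTransitive.exists_map_lambda (h : ThreeCSTransitive M) {p q w u v w' : M}
    (hpq : ¬ p ≤ q) (hqp : ¬ q ≤ p) (hpw : p < w) (hqw : q < w)
    (huv : ¬ u ≤ v) (hvu : ¬ v ≤ u) (huw : u < w') (hvw : v < w') :
    ∃ g : M ≃o M, g w = w' ∧ g '' {p, q} = {u, v} := by
  have ncard_eq : ∀ {a b c : M}, ¬ a ≤ b → a < c → b < c → ({c, a, b} : Set M).ncard = 3 :=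
    fun hab hac hbc => ncard_eq_three.2 ⟨_, _, _, hac.ne', hbc.ne', fun h => hab h.le, rfl⟩
  have isGreatest : ∀ {a b c : M}, a < c → b < c → IsGreatest ({c, a, b} : Set M) c :=
    fun hac hbc => ⟨mem_insert _ _, by simp [hac.le, hbc.le]⟩
  obtain ⟨g, hg⟩ := h _ _ (ncard_eq hpq hpw hqw) (ncard_eq huv huw hvw)
    (connected_induce_lambda hpw hqw) (connected_induce_lambda huw hvw)
    (exists_orderIso_lambda hpq hqp hpw hqw huv hvu huw hvw)
  have hgw : g w = w' :=
    (hg ▸ g.monotone.map_isGreatest (isGreatest hpw hqw)).unique (isGreatest huw hvw)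
  refine ⟨g, hgw, ?_⟩
  have hw' : w' ∉ ({u, v} : Set M) := by simp [huw.ne', hvw.ne']
  have hw : w ∉ ({p, q} : Set M) := by simp [hpw.ne', hqw.ne']
  rw [← insert_sdiff_self_of_notMem hw', ← hg, ← hgw, ← image_singleton,
    ← image_sdiff g.injective, insert_sdiff_self_of_notMem hw]

namespace IsTwoLevel

variable {p q w u v w' : M}

lemma isMin_of_lt (h : IsTwoLevel M) (hpw : p < w) : IsMin p :=
  (h p).resolve_right fun hp => hp.not_lt hpw

lemma isMax_of_lt (h : IsTwoLevel M) (hpw : p < w) : IsMax w :=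
  (h w).resolve_left fun hw => hw.not_lt hpw

lemma not_le_of_ne (h : IsTwoLevel M) (hqw : q < w) (hpq : p ≠ q) : ¬ p ≤ q :=
  fun hle => hpq (hle.antisymm (h.isMin_of_lt hqw hle))

lemma exists_map_lambda (h : IsTwoLevel M) (h3cs : ThreeCSTransitive M) (hpq : p ≠ q)
    (hpw : p < w) (hqw : q < w) (huv : u ≠ v) (huw : u < w') (hvw : v < w') :
    ∃ g : M ≃o M, g w = w' ∧ g '' {p, q} = {u, v} :=
  h3cs.exists_map_lambda (h.not_le_of_ne hqw hpq) (h.not_le_of_ne hpw hpq.symm) hpw hqw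
    (h.not_le_of_ne hvw huv) (h.not_le_of_ne huw huv.symm) huw hvw

end IsTwoLevel

section TwoLevel

variable {a b p q w : M}

lemma exists_other_upperBound (h2lev : IsTwoLevel M) (h3cs : ThreeCSTransitive M)
    (hne2 : ∀ a b : M, a < b → (Icc (principalCut a) (principalCut b)).ncard ≠ 2)
    (hpq : p ≠ q) (hpw : p < w) (hqw : q < w) : ∃ w', w' ≠ w ∧ p < w' ∧ q < w' := by
  obtain ⟨x, c, hxw, hpc, hxc, hxp, hwc⟩ := exists_of_ncard_Icc_ne_two hpw (hne2 p w hpw)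
  have hxw' : x < w := hxw.lt_of_ne fun he => hwc (he ▸ hxc)
  have hpc' : p < c := hpc.lt_of_ne fun he => hxp (he ▸ hxc)
  have hxc' : x < c := hxc.lt_of_ne fun he => hxp (h2lev.isMin_of_lt hxw' (he ▸ hpc))
  obtain ⟨g, hgw, hg⟩ := h2lev.exists_map_lambda h3cs (fun he => hxp he.ge) hpw hxw' hpq hpw hqw
  have hlt : ∀ z ∈ ({p, q} : Set M), z < g c := by
    rw [← hg]
    rintro _ ⟨y, hy | hy, rfl⟩ <;> subst y
    exacts [g.strictMono hpc', g.strictMono hxc']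
  refine ⟨g c, fun he => hwc ?_, hlt p (mem_insert p _), hlt q (mem_insert_of_mem p rfl)⟩
  exact (g.injective (he.trans hgw.symm)).ge

lemma top_notMem_pairClosure (h2lev : IsTwoLevel M) (h3cs : ThreeCSTransitive M)
    (hne2 : ∀ a b : M, a < b → (Icc (principalCut a) (principalCut b)).ncard ≠ 2)
    (hpq : p ≠ q) (hpw : p < w) (hqw : q < w) : w ∉ pairClosure p q := fun hw => by
  obtain ⟨w', hw'w, hpw', hqw'⟩ := exists_other_upperBound h2lev h3cs hne2 hpq hpw hqw
  have hww' : w ≤ w' := hw (by simp [hpw'.le, hqw'.le])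
  exact hw'w ((h2lev.isMax_of_lt hpw hww').antisymm hww')

lemma lt_of_mem_pairClosure (h2lev : IsTwoLevel M) (h3cs : ThreeCSTransitive M)
    (hne2 : ∀ a b : M, a < b → (Icc (principalCut a) (principalCut b)).ncard ≠ 2)
    (hpq : p ≠ q) (hpw : p < w) (hqw : q < w) {x : M} (hx : x ∈ pairClosure p q) : x < w :=
  (pairClosure_subset_Iic hpw.le hqw.le hx).lt_of_ne
    fun he => top_notMem_pairClosure h2lev h3cs hne2 hpq hpw hqw (he ▸ hx)

lemma pairClosure_eq_of_mem (h2lev : IsTwoLevel M) (h2cs : TwoCSTransitive M)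
    (h3cs : ThreeCSTransitive M)
    (hne2 : ∀ a b : M, a < b → (Icc (principalCut a) (principalCut b)).ncard ≠ 2)
    (hfin : ∀ a b : M, a < b → (Icc (principalCut a) (principalCut b)).Finite)
    (hpq : p ≠ q) (hpb : p < b) (hqb : q < b) {u v : M} (hu : u ∈ pairClosure p q)
    (hv : v ∈ pairClosure p q) (huv : u ≠ v) : pairClosure u v = pairClosure p q := by
  have hlt := fun {x} => lt_of_mem_pairClosure (x := x) h2lev h3cs hne2 hpq hpb hqb
  have hB := isCut_pairClosure hpb.le hqb.le
  refine (pairClosure_subset hB hu hv).eq_or_ssubset.resolve_right fun hss => ?_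
  obtain ⟨g, -, hg⟩ := h2lev.exists_map_lambda h3cs hpq hpb hqb huv (hlt hu) (hlt hv)
  let B : DMC M := ⟨pairClosure p q, hB⟩
  have hgB : DMC.congr g B < B := by
    change g '' pairClosure p q ⊂ pairClosure p q
    rwa [g.image_pairClosure hg]
  -- The iterates `gⁿ B` form a strictly decreasing chain of cuts, all between a point `x` of
  -- `gⁿ B` and `b`, with `n` the common size of the completion intervals.
  have hφ := (DMC.congr g).strictMono.strictAnti_iterate_of_map_lt hgB
  set n := (Icc (principalCut p) (principalCut b)).ncard
  obtain ⟨x, hx⟩ := ((DMC.congr g)^[n] B).2.1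
  have hxb : x < b := hlt (hφ.antitone (Nat.zero_le n) hx)
  have hcard := hφ.add_one_le_ncard (hfin x b hxb) fun i hi =>
    mem_Icc_principalCut.2 ⟨hφ.antitone hi hx,
      Subset.trans (hφ.antitone (Nat.zero_le i)) (pairClosure_subset_Iic hpb.le hqb.le)⟩
  rw [h2cs.ncard_Icc_eq hxb hpb] at hcard
  omega

/-- Otherwise the interval `[a, b]` of the completion would be the 3-element chain
`a < pairClosure a z₀ < b`. -/
lemma exists_pairClosure_ne (h2lev : IsTwoLevel M) (h3cs : ThreeCSTransitive M)
    (hne2 : ∀ a b : M, a < b → (Icc (principalCut a) (principalCut b)).ncard ≠ 2)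
    (hne3 : ∀ a b : M, a < b → (Icc (principalCut a) (principalCut b)).ncard ≠ 3)
    (hab : a < b) {z₀ : M} (hz₀b : z₀ < b) (hz₀a : z₀ ≠ a) :
    ∃ z₁ < b, z₁ ≠ a ∧ pairClosure a z₁ ≠ pairClosure a z₀ := by
  by_contra! hall
  have hlt : ∀ {y}, y ∈ pairClosure a z₀ → y < b :=
    lt_of_mem_pairClosure h2lev h3cs hne2 hz₀a.symm hab hz₀b
  let B : DMC M := ⟨_, isCut_pairClosure hab.le hz₀b.le⟩
  have hab' := principalCut_le_principalCut.2 hab.le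
  have hclass : Icc (principalCut a) (principalCut b) = {principalCut a, B, principalCut b} := by
    refine Subset.antisymm (fun J hJ => ?_) ?_
    · obtain hJa | hJb | ⟨hbJ, z, hzJ, hza⟩ := mem_Icc_principalCut_cases hJ
      · exact Or.inl hJa
      · exact Or.inr (Or.inr hJb)
      obtain ⟨haJ, hJb⟩ := mem_Icc_principalCut.1 hJ
      have hltb : ∀ {y}, y ∈ J.1 → y < b :=
        fun hy => (hJb hy).lt_of_ne (by rintro rfl; exact hbJ hy)
      refine Or.inr (Or.inl (Subtype.ext (Subset.antisymm (fun y hy => ?_) ?_)))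
      · obtain rfl | hya := eq_or_ne y a
        · exact mem_pairClosure_left y z₀
        · change y ∈ pairClosure a z₀
          rw [← hall y (hltb hy) hya]
          exact mem_pairClosure_right a y
      · change pairClosure a z₀ ⊆ J.1
        rw [← hall z (hltb hzJ) fun he => hza he.le]
        exact pairClosure_subset J.2 haJ hzJ
    · refine insert_subset ⟨le_rfl, hab'⟩ (pair_subset ?_ ⟨hab', le_rfl⟩)
      exact mem_Icc_principalCut.2 ⟨mem_pairClosure_left a z₀, fun y hy => (hlt hy).le⟩
  have haB : principalCut a ≠ B := fun he => by
    have hz₀ : z₀ ≤ a := (congrArg Subtype.val he).ge (mem_pairClosure_right a z₀)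
    exact hz₀a (hz₀.antisymm (h2lev.isMin_of_lt hab hz₀))
  have hbB : B ≠ principalCut b := fun he =>
    (hlt ((congrArg Subtype.val he).ge (le_refl b))).false
  have hab'' : principalCut a ≠ principalCut b := fun he =>
    hab.not_ge (principalCut_le_principalCut.1 he.ge)
  exact hne3 a b hab (hclass ▸ ncard_eq_three.2 ⟨_, _, _, haB, hab'', hbB, rfl⟩)

lemma injOn_pairClosure (h2lev : IsTwoLevel M) (h2cs : TwoCSTransitive M)
    (h3cs : ThreeCSTransitive M)
    (hne2 : ∀ a b : M, a < b → (Icc (principalCut a) (principalCut b)).ncard ≠ 2)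
    (hfin : ∀ a b : M, a < b → (Icc (principalCut a) (principalCut b)).Finite)
    (hab : a < b) {z₀ z₁ : M} (hz₀₁ : z₀ ≠ z₁) (hz₀b : z₀ < b) (hz₁b : z₁ < b)
    (ha : a ∉ pairClosure z₀ z₁) : InjOn (pairClosure a) (pairClosure z₀ z₁) := by
  intro z hz z' hz' he
  by_contra hzz'
  have hza : a ≠ z := fun h => ha (h ▸ hz)
  have hz'az : z' ∈ pairClosure a z := by
    rw [he]
    exact mem_pairClosure_right a z'
  have hline₁ : pairClosure z z' = pairClosure a z :=
    pairClosure_eq_of_mem h2lev h2cs h3cs hne2 hfin hza hab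
      (lt_of_mem_pairClosure h2lev h3cs hne2 hz₀₁ hz₀b hz₁b hz) (mem_pairClosure_right a z)
      hz'az hzz'
  have hline₂ : pairClosure z z' = pairClosure z₀ z₁ :=
    pairClosure_eq_of_mem h2lev h2cs h3cs hne2 hfin hz₀₁ hz₀b hz₁b hz hz' hzz'
  exact ha (hline₂ ▸ hline₁ ▸ mem_pairClosure_left a z)

theorem finite_Iio (h2lev : IsTwoLevel M) (h2cs : TwoCSTransitive M)
    (h3cs : ThreeCSTransitive M)
    (hne2 : ∀ a b : M, a < b → (Icc (principalCut a) (principalCut b)).ncard ≠ 2)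
    (hne3 : ∀ a b : M, a < b → (Icc (principalCut a) (principalCut b)).ncard ≠ 3)
    (hfin : ∀ a b : M, a < b → (Icc (principalCut a) (principalCut b)).Finite) (b : M) :
    (Iio b).Finite := by
  by_contra hinf
  change (Iio b).Infinite at hinf
  obtain ⟨a, hab⟩ := hinf.nonempty
  have hlines : (pairClosure a '' Iic b).Finite := finite_image_pairClosure (hfin a b hab) hab.le
  obtain ⟨z₀, ⟨hz₀b, hz₀a⟩, hB⟩ := (hinf.sdiff (finite_singleton a)).exists_infinite_of_finite_image
    (hlines.subset (image_mono (sdiff_subset.trans Iio_subset_Iic_self)))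
    fun z _ => mem_pairClosure_right a z
  obtain ⟨z₁, hz₁b, hz₁a, hne⟩ := exists_pairClosure_ne h2lev h3cs hne2 hne3 hab hz₀b hz₀a
  have hz₀₁ : z₀ ≠ z₁ := by
    rintro rfl
    exact hne rfl
  have hz₁B : z₁ ∉ pairClosure a z₀ := fun hz₁ => hne <|
    pairClosure_eq_of_mem h2lev h2cs h3cs hne2 hfin (Ne.symm hz₀a) hab hz₀b
      (mem_pairClosure_left a z₀) hz₁ (Ne.symm hz₁a)
  obtain ⟨g, -, hg⟩ := h2lev.exists_map_lambda h3cs (Ne.symm hz₀a) hab hz₀b hz₀₁ hz₀b hz₁b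
  have hC : (pairClosure z₀ z₁).Infinite := g.image_pairClosure hg ▸ hB.image g.injective.injOn
  have haC : a ∉ pairClosure z₀ z₁ := fun ha => hz₁B <| by
    rw [pairClosure_eq_of_mem h2lev h2cs h3cs hne2 hfin hz₀₁ hz₀b hz₁b ha
      (mem_pairClosure_left z₀ z₁) (Ne.symm hz₀a)]
    exact mem_pairClosure_right z₀ z₁
  exact hC (Finite.of_finite_image
    (hlines.subset (image_mono (pairClosure_subset_Iic hz₀b.le hz₁b.le)))
    (injOn_pairClosure h2lev h2cs h3cs hne2 hfin hab hz₀₁ hz₀b hz₁b haC))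

end TwoLevel

end

theorem locally_finite_iff_finite_intervals_general (M : Type*) [PartialOrder M]
    (h2lev : IsTwoLevel M)
    (h2cs : TwoCSTransitive M) (h3cs : ThreeCSTransitive M)
    (hnot : ∀ a b : M, a ∈ minSet M → b ∈ maxSet M → a < b →
      (Set.Icc (principalCut a) (principalCut b)).ncard ≠ 2 ∧
      (Set.Icc (principalCut a) (principalCut b)).ncard ≠ 3) :
    (∀ v : M, {w : M | (compGraph M).Adj v w}.Finite) ↔
      (∀ a b : M, a ∈ minSet M → b ∈ maxSet M → a < b →
        (Set.Icc (principalCut a) (principalCut b)).Finite) := by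
  have hnbhd : ∀ v : M, {w : M | (compGraph M).Adj v w} = Ioi v ∪ Iio v := fun _ => rfl
  refine ⟨fun hlf a b _ _ _ => ?_, fun hfin v => ?_⟩
  · refine finite_Icc_principalCut_of_finite_Iic (((hlf b).insert b).subset fun x hx => ?_)
    rw [hnbhd]
    rcases hx.eq_or_lt with rfl | h
    exacts [mem_insert x _, Or.inr (Or.inr h)]
  have hnot' := fun a b (hab : a < b) =>
    hnot a b (h2lev.isMin_of_lt hab) (h2lev.isMax_of_lt hab) hab
  have hfin' := fun a b (hab : a < b) =>
    hfin a b (h2lev.isMin_of_lt hab) (h2lev.isMax_of_lt hab) hab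
  rw [hnbhd]
  refine .union ?_ (finite_Iio h2lev h2cs h3cs (fun a b h => (hnot' a b h).1)
    (fun a b h => (hnot' a b h).2) hfin' v)
  refine finite_Iio (b := toDual v) h2lev.dual h2cs.dual h3cs.dual (fun a b h => ?_)
    (fun a b h => ?_) (fun a b h => (DMC.finite_Icc_dual_iff a b).2 (hfin' _ _ h))
  · rw [DMC.ncard_Icc_dual]
    exact (hnot' _ _ h).1
  · rw [DMC.ncard_Icc_dual]
    exact (hnot' _ _ h).2

/-- Proposition 4.4. Let `M` be a connected 2- and 3-CS-transitive 2-level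
poset, with at least one pair `a < b` (`a` minimal, `b` maximal), in which no completion
interval is a 2- or 3-element chain. Then the comparability graph of `M` is locally finite
iff all completion intervals are finite. -/
theorem locally_finite_iff_finite_intervals (M : Type*) [PartialOrder M]
    (h2lev : IsTwoLevel M)
    (hconn : (compGraph M).Connected)
    (h2cs : TwoCSTransitive M) (h3cs : ThreeCSTransitive M)
    (hpair : ∃ a b : M, a ∈ minSet M ∧ b ∈ maxSet M ∧ a < b)
    (hnot : ∀ a b : M, a ∈ minSet M → b ∈ maxSet M → a < b →
      (Set.Icc (principalCut a) (principalCut b)).ncard ≠ 2 ∧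
      (Set.Icc (principalCut a) (principalCut b)).ncard ≠ 3) :
    (∀ v : M, {w : M | (compGraph M).Adj v w}.Finite) ↔
      (∀ a b : M, a ∈ minSet M → b ∈ maxSet M → a < b →
        (Set.Icc (principalCut a) (principalCut b)).Finite) :=
  locally_finite_iff_finite_intervals_general M h2lev h2cs h3cs hnot
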